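/- Let N ≤ 4, κ ≤ 0 measurable, μ₁, β > 0, r₁, r₂ > 1, 2 < p₁ < 2 + 4/N, λ₁ ≥ 0. If u₁, u₂ ∈ H¹_rad(ℝᴺ) are smooth with u₁ ≤ 0, u₂ ≥ 0 and −Δu₁ − λ₁u₁ = μ₁|u₁|^{p₁−2}u₁ + r₁β|u₁|^{r₁−2}u₁u₂^{r₂} + κ(x)u₂, then u₁ ≡ 0. Consequently if u₁ ≢ 0, then λ₁ < 0. -/

import Mathlib

open MeasureTheory Real

noncomputable section

/-- The Laplacian of `u : ℝᴺ → ℝ`. -/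
def lap {N : ℕ} (u : EuclideanSpace ℝ (Fin N) → ℝ) (x : EuclideanSpace ℝ (Fin N)) : ℝ :=
  ∑ i, fderiv ℝ (fderiv ℝ u) x (EuclideanSpace.single i 1) (EuclideanSpace.single i 1)

lemma norm_single_smul {N : ℕ} (i : Fin N) (t : ℝ) :
    ‖t • (EuclideanSpace.single i 1 : EuclideanSpace ℝ (Fin N))‖ = |t| := by
  rw [norm_smul, EuclideanSpace.norm_single]
  simp

lemma norm_two_single {N : ℕ} {i j : Fin N} (hij : i ≠ j) (t s : ℝ) :
    ‖t • (EuclideanSpace.single i 1 : EuclideanSpace ℝ (Fin N)) + s • EuclideanSpace.single j 1‖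
      = Real.sqrt (t ^ 2 + s ^ 2) := by
  have h := EuclideanSpace.norm_eq
    (t • (EuclideanSpace.single i 1 : EuclideanSpace ℝ (Fin N)) + s • EuclideanSpace.single j 1)
  rw [h]
  congr 1
  have : ∀ k : Fin N,
      ‖((t • EuclideanSpace.single i 1 + s • EuclideanSpace.single j 1 :
          EuclideanSpace ℝ (Fin N))) k‖ ^ 2
        = (if k = i then t ^ 2 else 0) + (if k = j then s ^ 2 else 0) := by
    intro k
    simp only [PiLp.add_apply, PiLp.smul_apply, EuclideanSpace.single_apply, smul_eq_mul,
      Real.norm_eq_abs, sq_abs]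
    by_cases hki : k = i <;> by_cases hkj : k = j <;> simp_all
  rw [Finset.sum_congr rfl fun k _ => this k, Finset.sum_add_distrib]
  simp

section lemmas
variable {N : ℕ}
local notation "E" => EuclideanSpace ℝ (Fin N)

lemma hasDerivAt_line (w : E → ℝ) (hw : ContDiff ℝ (⊤ : ℕ∞) w) (x v : E) (s : ℝ) :
    HasDerivAt (fun s : ℝ => w (x + s • v)) (fderiv ℝ w (x + s • v) v) s := by
  have hline : HasDerivAt (fun s : ℝ => x + s • v) v s := by
    simpa using ((hasDerivAt_id s).smul_const v).const_add x
  exact (hw.differentiable (by simp) (x + s • v)).hasFDerivAt.comp_hasDerivAt s hline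

lemma hasDerivAt_line2 (w : E → ℝ) (hw : ContDiff ℝ (⊤ : ℕ∞) w) (x v : E) (s : ℝ) :
    HasDerivAt (fun s : ℝ => fderiv ℝ w (x + s • v) v)
      (fderiv ℝ (fderiv ℝ w) (x + s • v) v v) s := by
  have hline : HasDerivAt (fun s : ℝ => x + s • v) v s := by
    simpa using ((hasDerivAt_id s).smul_const v).const_add x
  have hdw : Differentiable ℝ (fderiv ℝ w) :=
    (hw.fderiv_right (m := 1) ((WithTop.coe_le_coe.2 le_top))).differentiable (by simp)
  have h1 : HasDerivAt (fun s : ℝ => fderiv ℝ w (x + s • v))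
      (fderiv ℝ (fderiv ℝ w) (x + s • v) v) s :=
    (hdw (x + s • v)).hasFDerivAt.comp_hasDerivAt s hline
  simpa using h1.clm_apply (hasDerivAt_const s v)

lemma f_hasDerivAt (w : E → ℝ) (hw : ContDiff ℝ (⊤ : ℕ∞) w) (v : E) (t : ℝ) :
    HasDerivAt (fun t : ℝ => w (t • v)) (fderiv ℝ w (t • v) v) t := by
  simpa using hasDerivAt_line w hw 0 v t

lemma f_deriv_eq (w : E → ℝ) (hw : ContDiff ℝ (⊤ : ℕ∞) w) (v : E) :
    deriv (fun t : ℝ => w (t • v)) = fun t => fderiv ℝ w (t • v) v :=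
  funext fun t => (f_hasDerivAt w hw v t).deriv

lemma f_hasDerivAt2 (w : E → ℝ) (hw : ContDiff ℝ (⊤ : ℕ∞) w) (v : E) (t : ℝ) :
    HasDerivAt (deriv (fun t : ℝ => w (t • v)))
      (fderiv ℝ (fderiv ℝ w) (t • v) v v) t := by
  rw [f_deriv_eq w hw v]
  simpa using hasDerivAt_line2 w hw 0 v t

end lemmas

lemma sqrt_hasDerivAt {t : ℝ} (ht : 0 < t) (s : ℝ) :
    HasDerivAt (fun s : ℝ => Real.sqrt (t ^ 2 + s ^ 2))
      (s / Real.sqrt (t ^ 2 + s ^ 2)) s := by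
  have hpos : 0 < t ^ 2 + s ^ 2 := by positivity
  have hq : HasDerivAt (fun s : ℝ => t ^ 2 + s ^ 2) (2 * s) s := by
    simpa [mul_comm] using ((hasDerivAt_pow 2 s).const_add (t ^ 2))
  have h := (Real.hasDerivAt_sqrt hpos.ne').comp s hq
  have hsq : Real.sqrt (t ^ 2 + s ^ 2) ≠ 0 := by positivity
  have e : s / Real.sqrt (t ^ 2 + s ^ 2) = 1 / (2 * Real.sqrt (t ^ 2 + s ^ 2)) * (2 * s) := by
    rw [div_mul_eq_mul_div, one_mul, mul_div_mul_left s _ two_ne_zero]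
  rw [e]
  exact h

lemma deriv2_sqrt_comp (f : ℝ → ℝ) (hfd : Differentiable ℝ f)
    (hfd2 : Differentiable ℝ (deriv f)) {t : ℝ} (ht : 0 < t) :
    deriv (deriv (fun s : ℝ => f (Real.sqrt (t ^ 2 + s ^ 2)))) 0 = deriv f t / t := by
  have hsqrt0 : Real.sqrt (t ^ 2 + 0 ^ 2) = t := by
    simp [Real.sqrt_sq ht.le]
  have hG : ∀ s : ℝ, HasDerivAt (fun s : ℝ => f (Real.sqrt (t ^ 2 + s ^ 2)))
      (deriv f (Real.sqrt (t ^ 2 + s ^ 2)) * (s / Real.sqrt (t ^ 2 + s ^ 2))) s := by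
    intro s
    exact ((hfd _).hasDerivAt).comp s (sqrt_hasDerivAt ht s)
  have hderivG : deriv (fun s : ℝ => f (Real.sqrt (t ^ 2 + s ^ 2)))
      = fun s => deriv f (Real.sqrt (t ^ 2 + s ^ 2)) * (s / Real.sqrt (t ^ 2 + s ^ 2)) :=
    funext fun s => (hG s).deriv
  rw [hderivG]
  have hA : HasDerivAt (fun s : ℝ => deriv f (Real.sqrt (t ^ 2 + s ^ 2)))
      (deriv (deriv f) (Real.sqrt (t ^ 2 + 0 ^ 2)) * (0 / Real.sqrt (t ^ 2 + 0 ^ 2))) 0 :=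
    ((hfd2 _).hasDerivAt).comp 0 (sqrt_hasDerivAt ht 0)
  have hB : HasDerivAt (fun s : ℝ => s / Real.sqrt (t ^ 2 + s ^ 2))
      ((1 * Real.sqrt (t ^ 2 + 0 ^ 2) - 0 * (0 / Real.sqrt (t ^ 2 + 0 ^ 2)))
        / (Real.sqrt (t ^ 2 + 0 ^ 2)) ^ 2) 0 := by
    refine (hasDerivAt_id 0).div (sqrt_hasDerivAt ht 0) ?_
    rw [hsqrt0]; exact ht.ne'
  have := (hA.mul hB).deriv
  simp only [Pi.mul_def] at this
  rw [this, hsqrt0]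
  field_simp
  ring

lemma lap_radial {N : ℕ} (hN : 0 < N) (w : EuclideanSpace ℝ (Fin N) → ℝ)
    (hw : ContDiff ℝ (⊤ : ℕ∞) w) (hrad : ∀ x y, ‖x‖ = ‖y‖ → w x = w y) {t : ℝ} (ht : 0 < t) :
    lap w (t • EuclideanSpace.single (⟨0, hN⟩ : Fin N) (1:ℝ))
      = deriv (deriv (fun r : ℝ => w (r • EuclideanSpace.single (⟨0, hN⟩ : Fin N) (1:ℝ)))) t
        + ((N : ℝ) - 1) *
          (deriv (fun r : ℝ => w (r • EuclideanSpace.single (⟨0, hN⟩ : Fin N) (1:ℝ))) t / t) := by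
  set i0 : Fin N := ⟨0, hN⟩
  set v : EuclideanSpace ℝ (Fin N) := EuclideanSpace.single i0 1 with hv
  set x : EuclideanSpace ℝ (Fin N) := t • v with hx
  set f : ℝ → ℝ := fun r => w (r • v) with hfdef
  have hfsm : ContDiff ℝ (⊤ : ℕ∞) f := hw.comp (contDiff_id.smul contDiff_const)
  have hfd : Differentiable ℝ f := hfsm.differentiable (by simp)
  have hfd2 : Differentiable ℝ (deriv f) :=
    fun r => (f_hasDerivAt2 w hw v r).differentiableAt
  -- second directional derivatives as 1-d second derivatives
  have hT : ∀ i : Fin N,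
      fderiv ℝ (fderiv ℝ w) x (EuclideanSpace.single i 1) (EuclideanSpace.single i 1)
        = deriv (deriv (fun s : ℝ => w (x + s • EuclideanSpace.single i 1))) 0 := by
    intro i
    have h2 : deriv (fun s : ℝ => w (x + s • EuclideanSpace.single i 1))
        = fun s => fderiv ℝ w (x + s • EuclideanSpace.single i 1) (EuclideanSpace.single i 1) :=
      funext fun s => (hasDerivAt_line w hw x _ s).deriv
    rw [h2]
    have h3 := (hasDerivAt_line2 w hw x (EuclideanSpace.single i 1) 0).deriv
    rw [h3]
    simp
  -- evaluate in each direction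
  have hval : ∀ i : Fin N,
      deriv (deriv (fun s : ℝ => w (x + s • EuclideanSpace.single i 1))) 0
        = if i = i0 then deriv (deriv f) t else deriv f t / t := by
    intro i
    by_cases hi : i = i0
    · rw [hi, if_pos rfl]
      have hg : (fun s : ℝ => w (x + s • (EuclideanSpace.single i0 1 : EuclideanSpace ℝ (Fin N))))
          = fun s => f (t + s) := by
        funext s
        simp only [hfdef]
        congr 1
        rw [hx, hv, add_smul]
      rw [hg]
      have d1 : deriv (fun s : ℝ => f (t + s)) = fun s => deriv f (t + s) :=
        funext fun s => deriv_comp_const_add f t s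
      rw [d1]
      rw [deriv_comp_const_add (deriv f) t 0, add_zero]
    · rw [if_neg hi]
      have hg : (fun s : ℝ => w (x + s • (EuclideanSpace.single i 1 : EuclideanSpace ℝ (Fin N))))
          = fun s => f (Real.sqrt (t ^ 2 + s ^ 2)) := by
        funext s
        simp only [hfdef]
        apply hrad
        rw [hx, hv, norm_two_single (fun h => hi h.symm), norm_single_smul,
          abs_of_nonneg (Real.sqrt_nonneg _)]
      rw [hg]
      exact deriv2_sqrt_comp f hfd hfd2 ht
  -- sum up
  have h1 : lap w x = ∑ i : Fin N, (if i = i0 then deriv (deriv f) t else deriv f t / t) :=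
    Finset.sum_congr rfl fun i _ => (hT i).trans (hval i)
  rw [h1, Finset.sum_eq_sum_sdiff_singleton_add (Finset.mem_univ i0), if_pos rfl]
  have h2 : ∀ i ∈ Finset.univ \ ({i0} : Finset (Fin N)),
      (if i = i0 then deriv (deriv f) t else deriv f t / t) = deriv f t / t := by
    intro i hi
    rw [Finset.mem_sdiff, Finset.mem_singleton] at hi
    rw [if_neg hi.2]
  rw [Finset.sum_congr rfl h2, Finset.sum_const, Finset.card_univ_diff]
  simp only [Fintype.card_fin, Finset.card_singleton, nsmul_eq_mul]
  have hcast : ((N - 1 : ℕ) : ℝ) = (N : ℝ) - 1 := by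
    push_cast [Nat.cast_sub hN]
    ring
  rw [hcast]
  ring

lemma annuli_bound {N : ℕ} (hN : 1 ≤ N) (hN4 : N ≤ 4) {c r₀ : ℝ} (hc : 0 < c) (hr : 0 < r₀)
    (k : ℕ) :
    c ^ 2 * r₀ ^ (N + 2) * ((2:ℝ) ^ N - 1) / (4 * r₀) ^ (2 * (N - 1))
      ≤ (c * ((2:ℝ) ^ k * r₀) / (2 * ((2:ℝ) ^ (k+1) * r₀)) ^ (N - 1)) ^ 2
        * (((2:ℝ) ^ (k+1) * r₀) ^ N - ((2:ℝ) ^ k * r₀) ^ N) := by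
  have hsucc : (2:ℝ) ^ (k+1) = 2 * 2 ^ k := by rw [pow_succ]; ring
  rw [hsucc]
  have hq : (1:ℝ) ≤ 2 ^ k := one_le_pow₀ (by norm_num)
  generalize hqq : (2:ℝ) ^ k = q at hq
  have hq0 : (0:ℝ) < q := lt_of_lt_of_le one_pos hq
  have h03 : (1:ℝ) ≤ q ^ 3 := one_le_pow₀ hq
  have h24 : q ^ 2 ≤ q ^ 4 := pow_le_pow_right₀ hq (by norm_num)
  have h45 : q ^ 4 ≤ q ^ 5 := pow_le_pow_right₀ hq (by norm_num)
  interval_cases N <;> norm_num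
  · nlinarith [mul_le_mul_of_nonneg_left h03 (by positivity : (0:ℝ) ≤ c^2*r₀^3)]
  · rw [div_pow, div_mul_eq_mul_div, div_le_div_iff₀ (by positivity) (by positivity)]
    nlinarith [mul_le_mul_of_nonneg_left h24 (by positivity : (0:ℝ) ≤ c^2*r₀^6)]
  · rw [div_pow, div_mul_eq_mul_div, div_le_div_iff₀ (by positivity) (by positivity)]
    nlinarith [mul_le_mul_of_nonneg_left h45 (by positivity : (0:ℝ) ≤ c^2*r₀^9)]
  · rw [div_pow, div_mul_eq_mul_div, div_le_div_iff₀ (by positivity) (by positivity)]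
    nlinarith [sq_nonneg (c*q*r₀)]


lemma pow_deriv_identity (m : ℕ) (t d1 d2 : ℝ) (ht : 0 < t) :
    (m : ℝ) * t ^ (m - 1) * d1 + t ^ m * d2 = t ^ m * (d2 + (m : ℝ) * (d1 / t)) := by
  rcases m with _ | j
  · simp
  · have hj : j + 1 - 1 = j := rfl
    rw [hj]
    field_simp
    ring

set_option maxHeartbeats 2000000 in
lemma radial_superharmonic_L2_eq_zero {N : ℕ} (hN : 0 < N) (hN4 : N ≤ 4)
    (w : EuclideanSpace ℝ (Fin N) → ℝ) (hw : ContDiff ℝ (⊤ : ℕ∞) w)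
    (hrad : ∀ x y, ‖x‖ = ‖y‖ → w x = w y) (hpos : ∀ x, 0 ≤ w x)
    (hL2 : MemLp w 2 (volume : Measure (EuclideanSpace ℝ (Fin N))))
    (hlap : ∀ x, lap w x ≤ 0) : ∀ x, w x = 0 := by
  classical
  set i0 : Fin N := ⟨0, hN⟩ with hi0
  set v : EuclideanSpace ℝ (Fin N) := EuclideanSpace.single i0 1 with hv
  set f : ℝ → ℝ := fun r => w (r • v) with hfdef
  set m : ℕ := N - 1 with hm
  have hfsm : ContDiff ℝ (⊤ : ℕ∞) f := hw.comp (contDiff_id.smul contDiff_const)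
  have hfd : Differentiable ℝ f := hfsm.differentiable (by simp)
  have hfd2 : Differentiable ℝ (deriv f) :=
    fun r => (f_hasDerivAt2 w hw v r).differentiableAt
  have hwf : ∀ x, w x = f ‖x‖ := by
    intro x
    refine hrad x (‖x‖ • v) ?_
    rw [hv, norm_single_smul, abs_of_nonneg (norm_nonneg x)]
  haveI : Nontrivial (EuclideanSpace ℝ (Fin N)) := by
    refine ⟨v, 0, ?_⟩
    intro h
    have : ‖v‖ = 0 := by rw [h, norm_zero]
    rw [hv, EuclideanSpace.norm_single] at this
    norm_num at this
  set Vr : ℝ := (volume (Metric.ball (0 : EuclideanSpace ℝ (Fin N)) 1)).toReal with hVrdef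
  have hVr : 0 < Vr := ENNReal.toReal_pos (Metric.measure_ball_pos _ _ one_pos).ne' measure_ball_lt_top.ne
  have hball : ∀ R : ℝ, 0 ≤ R →
      (volume (Metric.ball (0 : EuclideanSpace ℝ (Fin N)) R)).toReal = R ^ N * Vr := by
    intro R hR
    rw [Measure.addHaar_ball volume _ hR, ENNReal.toReal_mul,
      ENNReal.toReal_ofReal (by positivity), finrank_euclideanSpace_fin]
  have hInt : Integrable (fun x => w x ^ 2) volume := hL2.integrable_sq
  set I : ℝ := ∫ x, w x ^ 2 with hIdef
  have hInonneg := hInt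
  have hf0 : ∀ t, 0 ≤ f t := fun t => hpos _
  have heven : ∀ t, f (-t) = f t := by
    intro t
    refine hrad _ _ ?_
    rw [norm_smul, norm_smul]
    simp
  have hD0 : deriv f 0 = 0 := by
    have h1 : (fun t => f (-t)) = f := funext heven
    have h2 : deriv (fun t : ℝ => f (-t)) 0 = -deriv f 0 := by
      rw [deriv_comp_neg]
      simp
    rw [h1] at h2
    linarith
  -- the radial ODE inequality
  have hlapr : ∀ t : ℝ, 0 < t →
      deriv (deriv f) t + ((N : ℝ) - 1) * (deriv f t / t) ≤ 0 := by
    intro t ht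
    have := lap_radial hN w hw hrad ht
    rw [← hi0] at this
    calc deriv (deriv f) t + ((N : ℝ) - 1) * (deriv f t / t)
        = lap w (t • v) := by rw [this]
      _ ≤ 0 := hlap _
  -- psi = t^m * f' is antitone on [0, ∞)
  set ψ : ℝ → ℝ := fun t => t ^ m * deriv f t with hψdef
  have hψanti : AntitoneOn ψ (Set.Ici 0) := by
    have hcont : Continuous ψ := by
      rw [hψdef]
      exact (continuous_pow m).mul hfd2.continuous
    have hder : ∀ t : ℝ, HasDerivAt ψ
        ((m : ℝ) * t ^ (m - 1) * deriv f t + t ^ m * deriv (deriv f) t) t := by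
      intro t
      rw [hψdef]
      exact (hasDerivAt_pow m t).mul ((hfd2 t).hasDerivAt)
    refine antitoneOn_of_deriv_nonpos (convex_Ici 0) hcont.continuousOn
      (fun t _ => (hder t).differentiableAt.differentiableWithinAt) ?_
    intro t ht
    rw [interior_Ici, Set.mem_Ioi] at ht
    rw [(hder t).deriv]
    have hkey : (m : ℝ) * t ^ (m - 1) * deriv f t + t ^ m * deriv (deriv f) t
        = t ^ m * (deriv (deriv f) t + ((N : ℝ) - 1) * (deriv f t / t)) := by
      have hcast : ((m : ℕ) : ℝ) = (N : ℝ) - 1 := by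
        rw [hm]
        push_cast [Nat.cast_sub hN]
        ring
      rw [← hcast]
      exact pow_deriv_identity m t (deriv f t) (deriv (deriv f) t) ht
    rw [hkey]
    exact mul_nonpos_of_nonneg_of_nonpos (pow_nonneg ht.le m) (hlapr t ht)
  have hψ0 : ψ 0 = 0 := by rw [hψdef]; simp [hD0]
  have hfle : ∀ t : ℝ, 0 < t → deriv f t ≤ 0 := by
    intro t ht
    have := hψanti (Set.self_mem_Ici) (Set.mem_Ici.2 ht.le) ht.le
    rw [hψ0, hψdef] at this
    have hp : (0:ℝ) < t ^ m := pow_pos ht m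
    have h2 : t ^ m * deriv f t ≤ 0 := this
    nlinarith
  -- nonnegativity of f' via the L² contradiction
  have hfge : ∀ t : ℝ, 0 < t → 0 ≤ deriv f t := by
    intro r₀ hr₀
    by_contra hneg
    push_neg at hneg
    set c : ℝ := -(r₀ ^ m * deriv f r₀) with hcdef
    have hc : 0 < c := by
      have := pow_pos hr₀ m
      rw [hcdef]
      nlinarith
    have hbound : ∀ s : ℝ, r₀ ≤ s → deriv f s ≤ -c / s ^ m := by
      intro s hs
      have hs0 : 0 < s := lt_of_lt_of_le hr₀ hs
      have h1 : ψ s ≤ ψ r₀ := hψanti (Set.mem_Ici.2 hr₀.le) (Set.mem_Ici.2 hs0.le) hs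
      have h2 : s ^ m * deriv f s ≤ r₀ ^ m * deriv f r₀ := h1
      rw [le_div_iff₀ (pow_pos hs0 m)]
      rw [hcdef]
      nlinarith
    have hlow : ∀ s : ℝ, r₀ ≤ s → c * s / (2 * s) ^ m ≤ f s := by
      intro s hs
      have hs0 : 0 < s := lt_of_lt_of_le hr₀ hs
      have hint : ∫ u in s..(2*s), deriv f u = f (2*s) - f s :=
        intervalIntegral.integral_deriv_eq_sub (fun u _ => hfd u)
          (hfd2.continuous.intervalIntegrable _ _)
      have hmon : ∫ u in s..(2*s), deriv f u ≤ ∫ _u in s..(2*s), (-c/(2*s)^m : ℝ) := by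
        refine intervalIntegral.integral_mono_on (by linarith)
          (hfd2.continuous.intervalIntegrable _ _) (intervalIntegrable_const) ?_
        intro u hu
        have hru : r₀ ≤ u := le_trans hs hu.1
        have hu0 : 0 < u := lt_of_lt_of_le hr₀ hru
        have h1 := hbound u hru
        have h2 : -c / u ^ m ≤ -c / (2*s)^m := by
          have hum : u ^ m ≤ (2*s)^m := pow_le_pow_left₀ hu0.le hu.2 m
          have := div_le_div_of_nonneg_left hc.le (pow_pos hu0 m) hum
          have hd1 : -c / u ^ m = -(c / u ^ m) := by ring
          have hd2 : -c / (2*s) ^ m = -(c / (2*s) ^ m) := by ring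
          rw [hd1, hd2]
          linarith
        linarith
      have hconstint : ∫ _u in s..(2*s), (-c/(2*s)^m : ℝ) = (2*s - s) * (-c/(2*s)^m) := by
        rw [intervalIntegral.integral_const]
        simp [smul_eq_mul]
      rw [hint, hconstint] at hmon
      have h3 := hf0 (2*s)
      have h4 : (2*s - s) * (-c/(2*s)^m) = -(c * s/(2*s)^m) := by ring
      rw [h4] at hmon
      linarith
    -- annuli argument
    set A : ℕ → Set (EuclideanSpace ℝ (Fin N)) :=
      fun k => Metric.ball 0 (2^(k+1) * r₀) \ Metric.closedBall 0 (2^k * r₀) with hAdef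
    have hAm : ∀ k, MeasurableSet (A k) :=
      fun k => measurableSet_ball.diff measurableSet_closedBall
    have hpow1 : ∀ k : ℕ, (1:ℝ) ≤ 2^k := fun k => one_le_pow₀ (by norm_num)
    have hak : ∀ k : ℕ, (0:ℝ) < 2^k * r₀ := fun k => by positivity
    have hinc : ∀ k : ℕ, (2:ℝ)^k * r₀ < 2^(k+1) * r₀ := by
      intro k
      have : (2:ℝ)^k < 2^(k+1) := by
        rw [pow_succ]
        nlinarith [pow_pos (by norm_num : (0:ℝ) < 2) k]
      nlinarith
    have hμA : ∀ k : ℕ, (volume (A k)).toReal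
        = ((2^(k+1)*r₀)^N - (2^k*r₀)^N) * Vr := by
      intro k
      rw [hAdef]
      simp only []
      rw [measure_diff (Metric.closedBall_subset_ball (hinc k))
        measurableSet_closedBall.nullMeasurableSet measure_closedBall_lt_top.ne]
      rw [Measure.addHaar_closedBall volume _ (hak k).le,
        Measure.addHaar_ball volume _ (hak (k+1)).le, finrank_euclideanSpace_fin]
      have hle2 : ((2:ℝ)^k * r₀)^N ≤ ((2:ℝ)^(k+1) * r₀)^N :=
        pow_le_pow_left₀ (hak k).le (hinc k).le N
      rw [ENNReal.toReal_sub_of_le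
        (mul_le_mul_left (ENNReal.ofReal_le_ofReal hle2) _)
        (ENNReal.mul_ne_top ENNReal.ofReal_ne_top measure_ball_lt_top.ne)]
      rw [ENNReal.toReal_mul, ENNReal.toReal_mul,
        ENNReal.toReal_ofReal (by positivity), ENNReal.toReal_ofReal (by positivity)]
      ring
    have hwA : ∀ k : ℕ, ∀ x ∈ A k, c * (2^k*r₀) / (2*(2^(k+1)*r₀))^m ≤ w x := by
      intro k x hx
      obtain ⟨hx1, hx2⟩ := hx
      rw [Metric.mem_ball, dist_zero_right] at hx1
      rw [Metric.mem_closedBall, dist_zero_right, not_le] at hx2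
      have hxr : r₀ ≤ ‖x‖ := by
        have := hpow1 k
        nlinarith
      have hx0 : 0 < ‖x‖ := lt_of_lt_of_le hr₀ hxr
      rw [hwf x]
      refine le_trans ?_ (hlow ‖x‖ hxr)
      refine div_le_div₀ (by positivity) ?_ (by positivity) ?_
      · nlinarith
      · refine pow_le_pow_left₀ (by positivity) ?_ m
        nlinarith
    set c0 : ℝ := c ^ 2 * r₀ ^ (N + 2) * ((2:ℝ) ^ N - 1) / (4 * r₀) ^ (2 * m) with hc0def
    have h2N : (1:ℝ) < 2 ^ N := one_lt_pow₀ (by norm_num) hN.ne'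
    have hc0 : 0 < c0 := by
      rw [hc0def]
      have : (0:ℝ) < (2:ℝ)^N - 1 := by linarith
      positivity
    have hIA : ∀ k : ℕ, c0 * Vr ≤ ∫ x in A k, w x ^ 2 := by
      intro k
      have hbk : (0:ℝ) ≤ c * (2^k*r₀) / (2*(2^(k+1)*r₀))^m := by positivity
      have h1 : (c * (2^k*r₀) / (2*(2^(k+1)*r₀))^m) ^ 2 * (volume (A k)).toReal
          ≤ ∫ x in A k, w x ^ 2 := by
        rw [mul_comm, ← smul_eq_mul, ← measureReal_def]
        refine setIntegral_ge_of_const_le (hAm k) ?_ ?_ hInt.integrableOn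
        · exact ((measure_mono Set.diff_subset).trans_lt measure_ball_lt_top).ne
        · intro x hx
          exact pow_le_pow_left₀ hbk (hwA k x hx) 2
      have h2 := annuli_bound hN hN4 hc hr₀ k
      rw [← hm] at h2
      have h3 : c0 ≤ (c * (2^k*r₀) / (2*(2^(k+1)*r₀))^m) ^ 2
          * ((2^(k+1)*r₀)^N - (2^k*r₀)^N) := h2
      have h4 := mul_le_mul_of_nonneg_right h3 hVr.le
      rw [hμA k] at h1
      nlinarith [hVr]
    have hdisj : ∀ {k j : ℕ}, k < j → Disjoint (A k) (A j) := by
      intro k j hkj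
      refine Set.disjoint_left.2 ?_
      intro x hxk hxj
      obtain ⟨hk1, _⟩ := hxk
      obtain ⟨_, hj2⟩ := hxj
      rw [Metric.mem_ball, dist_zero_right] at hk1
      have hj2' : (2:ℝ)^j * r₀ < ‖x‖ := by
        by_contra hcon
        push_neg at hcon
        exact hj2 (by rw [Metric.mem_closedBall, dist_zero_right]; exact hcon)
      have hle : (2:ℝ)^(k+1) ≤ 2^j := pow_le_pow_right₀ (by norm_num) hkj
      nlinarith
    have hsum : ∀ K : ℕ, (K : ℝ) * (c0 * Vr) ≤ I := by
      intro K
      have hpair : (↑(Finset.range K) : Set ℕ).Pairwise (Function.onFun Disjoint A) := by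
        intro k _ j _ hne
        rcases lt_or_gt_of_ne hne with h | h
        · exact hdisj h
        · exact (hdisj h).symm
      have hunion := integral_biUnion_finset (f := fun x => w x ^ 2) (μ := volume)
        (Finset.range K) (fun k _ => hAm k) hpair (fun k _ => hInt.integrableOn)
      have hle1 : ∑ k ∈ Finset.range K, (c0 * Vr) ≤ ∑ k ∈ Finset.range K, ∫ x in A k, w x ^ 2 :=
        Finset.sum_le_sum (fun k _ => hIA k)
      rw [Finset.sum_const, Finset.card_range, nsmul_eq_mul] at hle1
      rw [← hunion] at hle1
      refine hle1.trans ?_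
      exact setIntegral_le_integral hInt (Filter.Eventually.of_forall fun x => sq_nonneg _)
    obtain ⟨K, hK⟩ := exists_nat_gt (I / (c0 * Vr))
    have h1 := hsum K
    have h2 : I / (c0 * Vr) * (c0 * Vr) < (K:ℝ) * (c0 * Vr) := by
      have : (0:ℝ) < c0 * Vr := by positivity
      exact mul_lt_mul_of_pos_right hK this
    rw [div_mul_cancel₀] at h2
    · linarith
    · positivity
  -- f is constant on [0,∞)
  have hconst : ∀ t : ℝ, 0 ≤ t → f t = f 0 := by
    have hmono : MonotoneOn f (Set.Ici 0) := by
      refine monotoneOn_of_deriv_nonneg (convex_Ici 0) (hfd.continuous.continuousOn) ?_ ?_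
      · exact fun t _ => (hfd t).differentiableWithinAt
      · intro t ht
        rw [interior_Ici] at ht
        exact hfge t ht
    have hanti : AntitoneOn f (Set.Ici 0) := by
      refine antitoneOn_of_deriv_nonpos (convex_Ici 0) (hfd.continuous.continuousOn) ?_ ?_
      · exact fun t _ => (hfd t).differentiableWithinAt
      · intro t ht
        rw [interior_Ici] at ht
        exact hfle t ht
    intro t ht
    exact le_antisymm (hanti Set.self_mem_Ici (Set.mem_Ici.2 ht) ht)
      (hmono Set.self_mem_Ici (Set.mem_Ici.2 ht) ht)
  -- conclude: w is the constant f 0, which must be 0 by L²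
  have hwconst : ∀ x, w x = f 0 := fun x => (hwf x).trans (hconst _ (norm_nonneg x))
  have hzero : f 0 = 0 := by
    by_contra hne
    have hfpos : 0 < f 0 := (hf0 0).lt_of_ne' hne
    set C : ℝ := (f 0)^2 * Vr with hCdef
    have hCpos : 0 < C := by positivity
    have hlin : ∀ R : ℝ, 1 ≤ R → C * R ≤ I := by
      intro R hR
      have h0R : (0:ℝ) ≤ R := by linarith
      have h1 : (f 0)^2 * (volume (Metric.ball (0 : EuclideanSpace ℝ (Fin N)) R)).toReal
          ≤ ∫ x in Metric.ball (0 : EuclideanSpace ℝ (Fin N)) R, w x ^ 2 := by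
        rw [mul_comm, ← smul_eq_mul, ← measureReal_def]
        refine setIntegral_ge_of_const_le measurableSet_ball measure_ball_lt_top.ne
          (fun x _ => ?_) hInt.integrableOn
        rw [hwconst x]
      rw [hball R h0R] at h1
      have h2 : ∫ x in Metric.ball (0 : EuclideanSpace ℝ (Fin N)) R, w x ^ 2 ≤ I :=
        setIntegral_le_integral hInt (Filter.Eventually.of_forall fun x => sq_nonneg _)
      have hRN : R ≤ R^N := le_self_pow₀ hR hN.ne'
      nlinarith
    set R : ℝ := max 1 (I / C + 1) with hRdef
    have h1R : 1 ≤ R := le_max_left _ _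
    have h2 := hlin R h1R
    have h3 : I / C + 1 ≤ R := le_max_right _ _
    have hkey : C * (I / C) = I := by field_simp
    nlinarith
  intro x
  rw [hwconst x, hzero]


lemma lap_neg {N : ℕ} (u : EuclideanSpace ℝ (Fin N) → ℝ) (y : EuclideanSpace ℝ (Fin N)) :
    lap (fun x => -u x) y = -lap u y := by
  unfold lap
  have h1 : (fderiv ℝ (fun x => -u x)) = fun z => -fderiv ℝ u z :=
    funext fun z => fderiv_neg
  rw [h1]
  have h2 : fderiv ℝ (fun z => -fderiv ℝ u z) y = -fderiv ℝ (fderiv ℝ u) y := fderiv_neg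
  rw [h2]
  simp

/-- Lemma 2.6: for `N ≤ 4`, `κ ≤ 0`, `lam₁ ≥ 0`, a nonpositive radial `H¹` solution `u₁`
(with `u₂ ≥ 0`) of the first equation must vanish; consequently a nontrivial solution
forces `lam₁ < 0`. -/
theorem nonpos_solution_vanishes_kappa_nonpos (N : ℕ) (hN₁ : 1 ≤ N) (hN₄ : N ≤ 4)
    (κ : EuclideanSpace ℝ (Fin N) → ℝ) (hκmeas : Measurable κ) (hκ : ∀ x, κ x ≤ 0)
    (μ₁ β r₁ r₂ p₁ lam₁ : ℝ) (hμ₁ : 0 < μ₁) (hβ : 0 < β)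
    (hr₁ : 1 < r₁) (hr₂ : 1 < r₂)
    (hp₁ : 2 < p₁) (hp₁' : p₁ < 2 + 4 / (N : ℝ)) (hlam₁ : 0 ≤ lam₁)
    (u₁ u₂ : EuclideanSpace ℝ (Fin N) → ℝ)
    (hsm₁ : ContDiff ℝ (⊤ : ℕ∞) u₁) (hsm₂ : ContDiff ℝ (⊤ : ℕ∞) u₂)
    (hrad₁ : ∀ x y, ‖x‖ = ‖y‖ → u₁ x = u₁ y)
    (hrad₂ : ∀ x y, ‖x‖ = ‖y‖ → u₂ x = u₂ y)
    (hL2₁ : MemLp u₁ 2 (volume : Measure (EuclideanSpace ℝ (Fin N))))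
    (hL2₂ : MemLp u₂ 2 (volume : Measure (EuclideanSpace ℝ (Fin N))))
    (hneg₁ : ∀ x, u₁ x ≤ 0) (hpos₂ : ∀ x, 0 ≤ u₂ x)
    (heq : ∀ x, -lap u₁ x - lam₁ * u₁ x
        = μ₁ * |u₁ x| ^ (p₁ - 2) * u₁ x
          + r₁ * β * |u₁ x| ^ (r₁ - 2) * u₁ x * u₂ x ^ r₂ + κ x * u₂ x) :
    ∀ x, u₁ x = 0 := by
  have hN : 0 < N := hN₁
  have hlapge : ∀ x, 0 ≤ lap u₁ x := by
    intro x
    have h := heq x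
    have t1 : μ₁ * |u₁ x| ^ (p₁ - 2) * u₁ x ≤ 0 :=
      mul_nonpos_of_nonneg_of_nonpos
        (mul_nonneg hμ₁.le (Real.rpow_nonneg (abs_nonneg _) _)) (hneg₁ x)
    have t2 : r₁ * β * |u₁ x| ^ (r₁ - 2) * u₁ x * u₂ x ^ r₂ ≤ 0 := by
      refine mul_nonpos_of_nonpos_of_nonneg ?_ (Real.rpow_nonneg (hpos₂ x) _)
      refine mul_nonpos_of_nonneg_of_nonpos ?_ (hneg₁ x)
      have : (0:ℝ) < r₁ := lt_trans one_pos hr₁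
      exact mul_nonneg (mul_nonneg this.le hβ.le) (Real.rpow_nonneg (abs_nonneg _) _)
    have t3 : κ x * u₂ x ≤ 0 := mul_nonpos_of_nonpos_of_nonneg (hκ x) (hpos₂ x)
    have t4 : lam₁ * u₁ x ≤ 0 := mul_nonpos_of_nonneg_of_nonpos hlam₁ (hneg₁ x)
    linarith
  have hmain := radial_superharmonic_L2_eq_zero hN hN₄ (fun x => -u₁ x) hsm₁.neg
    (fun x y h => by show -u₁ x = -u₁ y; rw [hrad₁ x y h])
    (fun x => neg_nonneg.2 (hneg₁ x)) hL2₁.neg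
    (fun x => by rw [lap_neg]; linarith [hlapge x])
  intro x
  have h' : -u₁ x = 0 := hmain x
  linarith

end
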